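/- If DDim_{2p,d}(H) = DDim_{p,d}(H) = t, then H has at least one (p,d)-essential hypothesis. -/

import Mathlib

open scoped Classical

universe u

variable {X : Type u}

/-- Restriction of a hypothesis class to hypotheses labelling `x` with `y`. -/
def restrict (H : Set (X → Bool)) (x : X) (y : Bool) : Set (X → Bool) :=
  {h ∈ H | h x = y}

/-- Restriction along a sequence of labelled examples. -/
def restrictSeq (H : Set (X → Bool)) : List (X × Bool) → Set (X → Bool)
  | [] => H
  | (x, y) :: rest => restrictSeq (restrict H x y) rest

/-- `Shatters H d` : `H` shatters a complete mistake tree of depth `d`. -/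
def Shatters (H : Set (X → Bool)) : ℕ → Prop
  | 0 => H.Nonempty
  | d + 1 => ∃ x : X, Shatters (restrict H x false) d ∧ Shatters (restrict H x true) d

/-- The Littlestone dimension, with value `⊥` for the empty class
(the usual `-1` convention) and `⊤` for infinite dimension. -/
noncomputable def LDim (H : Set (X → Bool)) : WithBot ℕ∞ :=
  sSup {e : WithBot ℕ∞ | ∃ n : ℕ, e = ((n : ℕ∞) : WithBot ℕ∞) ∧ Shatters H n}

/-- Littlestone dimension, truncated to a natural number. -/
noncomputable def ldimN (H : Set (X → Bool)) : ℕ :=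
  ((LDim H).unbotD 0).toNat

/-- The standard optimal algorithm of a class. -/
noncomputable def SOA (H : Set (X → Bool)) (x : X) : Bool :=
  if LDim (restrict H x false) = LDim H then false else true

/-- Restricting `H` along points `xs`, each labelled by `SOA H`. -/
noncomputable def soaChain (H : Set (X → Bool)) (xs : List X) : Set (X → Bool) :=
  restrictSeq H (xs.map fun x => (x, SOA H x))

/-- `H` is `k`-irreducible. -/
noncomputable def Irred (k : ℕ) (H : Set (X → Bool)) : Prop :=
  ∀ xs : List X, xs.length = k → LDim (soaChain H xs) = LDim H

/-- `H` is `k`-reducible. -/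
noncomputable def Reducible (k : ℕ) (H : Set (X → Bool)) : Prop :=
  ∃ xs : List X, xs.length = k ∧ LDim (soaChain H xs) < LDim H

/-- Binary decomposition trees: internal nodes labelled by domain points. -/
inductive DTree (X : Type u) : Type u where
  | leaf : DTree X
  | node : X → DTree X → DTree X → DTree X

/-- The example-sequences of all leaves of a tree (below the prefix `pre`). -/
def DTree.leafPaths : DTree X → List (X × Bool) → List (List (X × Bool))
  | .leaf, pre => [pre]
  | .node x l r, pre => l.leafPaths (pre ++ [(x, false)]) ++ r.leafPaths (pre ++ [(x, true)])

/-- The example-sequences of all nodes of a tree (below the prefix `pre`). -/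
def DTree.nodePaths : DTree X → List (X × Bool) → List (List (X × Bool))
  | .leaf, pre => [pre]
  | .node x l r, pre =>
      pre :: (l.nodePaths (pre ++ [(x, false)]) ++ r.nodePaths (pre ++ [(x, true)]))

/-- Validity of a `(p,d)`-decomposition tree of `H`. -/
noncomputable def ValidTree (p d : ℕ) (H : Set (X → Bool)) (t : DTree X) : Prop :=
  (∀ s ∈ t.nodePaths [], s.length ≤ p * (2 ^ (d - ldimN (restrictSeq H s) + 1) - 1)) ∧
  (∀ s ∈ t.leafPaths [], s.length ≤ p * (2 ^ (d - ldimN (restrictSeq H s)) - 1) ∧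
    Irred (p * 2 ^ (d - ldimN (restrictSeq H s))) (restrictSeq H s))

/-- The degree of a decomposition tree: the largest leaf Littlestone dimension. -/
noncomputable def degree (H : Set (X → Bool)) (t : DTree X) : ℕ :=
  ((t.leafPaths []).map fun s => ldimN (restrictSeq H s)).foldr max 0

/-- The `(p,d)`-decomposition dimension of `H`. -/
noncomputable def DDim (p d : ℕ) (H : Set (X → Bool)) : ℕ :=
  sInf {t : ℕ | ∃ tr : DTree X, ValidTree p d H tr ∧ degree H tr = t}

/-- An optimal `(p,d)`-decomposition tree of `H`. -/
noncomputable def OptimalTree (p d : ℕ) (H : Set (X → Bool)) (tr : DTree X) : Prop :=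
  ValidTree p d H tr ∧ degree H tr = DDim p d H

/-- `f` is `(p,d)`-essential to `H`: it arises as the `SOA` of a leaf of maximal
dimension in every optimal `(p,d)`-decomposition of `H`. -/
noncomputable def Essential (p d : ℕ) (H : Set (X → Bool)) (f : X → Bool) : Prop :=
  ∀ tr : DTree X, OptimalTree p d H tr →
    ∃ s ∈ tr.leafPaths [], ldimN (restrictSeq H s) = DDim p d H ∧ SOA (restrictSeq H s) = f


section Basic

variable {H G : Set (X → Bool)}

lemma restrict_subset (H : Set (X → Bool)) (x : X) (y : Bool) : restrict H x y ⊆ H :=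
  fun _ hh => hh.1

lemma restrict_mono (hGH : G ⊆ H) (x : X) (y : Bool) :
    restrict G x y ⊆ restrict H x y := fun _ hh => ⟨hGH hh.1, hh.2⟩

lemma restrictSeq_subset (L : List (X × Bool)) : ∀ H : Set (X → Bool), restrictSeq H L ⊆ H := by
  induction L with
  | nil => intro H; exact subset_rfl
  | cons a rest ih =>
      intro H
      obtain ⟨x, y⟩ := a
      exact (ih (restrict H x y)).trans (restrict_subset H x y)

lemma restrictSeq_mono (L : List (X × Bool)) :
    ∀ {G H : Set (X → Bool)}, G ⊆ H → restrictSeq G L ⊆ restrictSeq H L := by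
  induction L with
  | nil => intro G H h; exact h
  | cons a rest ih =>
      intro G H h
      obtain ⟨x, y⟩ := a
      exact ih (restrict_mono h x y)

lemma restrictSeq_append {L2 : List (X × Bool)} (L1 : List (X × Bool)) :
    ∀ H : Set (X → Bool), restrictSeq H (L1 ++ L2) = restrictSeq (restrictSeq H L1) L2 := by
  induction L1 with
  | nil => intro H; rfl
  | cons a rest ih =>
      intro H
      obtain ⟨x, y⟩ := a
      show restrictSeq (restrict H x y) (rest ++ L2) = restrictSeq (restrictSeq (restrict H x y) rest) L2
      exact ih (restrict H x y)

lemma restrict_empty (x : X) (y : Bool) : restrict (∅ : Set (X → Bool)) x y = ∅ := by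
  ext h; simp [restrict]

lemma restrictSeq_empty (L : List (X × Bool)) : restrictSeq (∅ : Set (X → Bool)) L = ∅ := by
  induction L with
  | nil => rfl
  | cons a rest ih =>
      obtain ⟨x, y⟩ := a
      show restrictSeq (restrict (∅ : Set (X → Bool)) x y) rest = ∅
      rw [restrict_empty, ih]

lemma mem_restrictSeq_label (L : List (X × Bool)) :
    ∀ (H : Set (X → Bool)) (x : X) (y : Bool), (x, y) ∈ L →
      ∀ h ∈ restrictSeq H L, h x = y := by
  induction L with
  | nil => intro H x y hmem; simp at hmem
  | cons a rest ih =>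
      intro H x y hmem h hh
      obtain ⟨x', y'⟩ := a
      rcases List.mem_cons.mp hmem with h1 | h2
      · obtain ⟨hx, hy⟩ := Prod.mk.inj h1
        subst hx; subst hy
        exact (restrictSeq_subset rest _ hh).2
      · exact ih (restrict H x' y') x y h2 h hh

lemma restrict_eq_self {x : X} {y : Bool} (hall : ∀ h ∈ H, h x = y) : restrict H x y = H := by
  ext h; exact ⟨fun hh => hh.1, fun hh => ⟨hh, hall h hh⟩⟩

lemma restrictSeq_eq_self (L : List (X × Bool)) :
    ∀ H : Set (X → Bool), (∀ xy ∈ L, ∀ h ∈ H, h xy.1 = xy.2) → restrictSeq H L = H := by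
  induction L with
  | nil => intro H _; rfl
  | cons a rest ih =>
      intro H hall
      obtain ⟨x, y⟩ := a
      show restrictSeq (restrict H x y) rest = H
      rw [restrict_eq_self (hall (x, y) List.mem_cons_self)]
      exact ih H fun xy hxy => hall xy (List.mem_cons_of_mem _ hxy)

lemma mem_restrictSeq_self {h : X → Bool} (hh : h ∈ H) (xs : List X) :
    h ∈ restrictSeq H (xs.map fun x => (x, h x)) := by
  induction xs generalizing H with
  | nil => exact hh
  | cons x rest ih => exact ih ⟨hh, rfl⟩

end Basic

section LDimLemmas

variable {H G : Set (X → Bool)}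

lemma shatters_mono (n : ℕ) : ∀ {G H : Set (X → Bool)}, G ⊆ H → Shatters G n → Shatters H n := by
  induction n with
  | zero => intro G H h hs; exact hs.mono h
  | succ n ih =>
      intro G H h hs
      obtain ⟨x, h0, h1⟩ := hs
      exact ⟨x, ih (restrict_mono h x false) h0, ih (restrict_mono h x true) h1⟩

lemma shatters_succ {n : ℕ} : ∀ {H : Set (X → Bool)}, Shatters H (n + 1) → Shatters H n := by
  induction n with
  | zero =>
      intro H hs
      obtain ⟨x, h0, _⟩ := hs
      exact h0.mono (restrict_subset H x false)
  | succ n ih =>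
      intro H hs
      obtain ⟨x, h0, h1⟩ := hs
      exact ⟨x, ih h0, ih h1⟩

lemma shatters_of_le {m n : ℕ} (hmn : m ≤ n) (hs : Shatters H n) : Shatters H m := by
  induction n with
  | zero => exact (Nat.le_zero.mp hmn) ▸ hs
  | succ n ih =>
      rcases Nat.lt_or_ge m (n + 1) with h | h
      · exact ih (Nat.lt_succ_iff.mp h) (shatters_succ hs)
      · exact (Nat.le_antisymm hmn h) ▸ hs

lemma shatters_empty (n : ℕ) : ¬ Shatters (∅ : Set (X → Bool)) n := by
  induction n with
  | zero => simp [Shatters]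
  | succ n ih =>
      rintro ⟨x, h0, _⟩
      exact ih (restrict_empty x false ▸ h0)

lemma shatters_le_LDim {n : ℕ} (h : Shatters H n) : ((n : ℕ∞) : WithBot ℕ∞) ≤ LDim H :=
  le_sSup ⟨n, rfl, h⟩

lemma LDim_le_iff {c : WithBot ℕ∞} :
    LDim H ≤ c ↔ ∀ n : ℕ, Shatters H n → ((n : ℕ∞) : WithBot ℕ∞) ≤ c := by
  constructor
  · intro h n hs; exact (shatters_le_LDim hs).trans h
  · intro h
    apply sSup_le
    rintro e ⟨n, rfl, hs⟩
    exact h n hs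

lemma LDim_mono (hGH : G ⊆ H) : LDim G ≤ LDim H :=
  LDim_le_iff.mpr fun n hs => shatters_le_LDim (shatters_mono n hGH hs)

lemma LDim_empty : LDim (∅ : Set (X → Bool)) = ⊥ := by
  have : {e : WithBot ℕ∞ | ∃ n : ℕ, e = ((n : ℕ∞) : WithBot ℕ∞) ∧ Shatters (∅ : Set (X → Bool)) n} = ∅ := by
    ext e; simp only [Set.mem_setOf_eq, Set.mem_empty_iff_false, iff_false]
    rintro ⟨n, _, hs⟩
    exact shatters_empty n hs
  rw [LDim, this, sSup_empty]

lemma nonempty_of_LDim_ne_bot (h : LDim H ≠ ⊥) : H.Nonempty := by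
  rcases Set.eq_empty_or_nonempty H with rfl | hne
  · exact absurd LDim_empty h
  · exact hne

lemma ldimN_empty : ldimN (∅ : Set (X → Bool)) = 0 := by
  rw [ldimN, LDim_empty]; rfl

/-- Attainment: finite-dimensional nonempty classes. -/
lemma ldim_spec (d : ℕ) (hd : LDim H ≤ ((d : ℕ∞) : WithBot ℕ∞)) (hne : H.Nonempty) :
    LDim H = ((ldimN H : ℕ∞) : WithBot ℕ∞) ∧ Shatters H (ldimN H) ∧
      ¬ Shatters H (ldimN H + 1) ∧ ldimN H ≤ d := by
  set T : Set ℕ := {n : ℕ | Shatters H n} with hT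
  have hbdd : ∀ n ∈ T, n ≤ d := by
    intro n hn
    have := (shatters_le_LDim hn).trans hd
    exact_mod_cast this
  have h0T : (0 : ℕ) ∈ T := hne
  have hbdd' : BddAbove T := ⟨d, fun n hn => hbdd n hn⟩
  set m := sSup T with hm
  have hmT : m ∈ T := Nat.sSup_mem ⟨0, h0T⟩ hbdd'
  have hLD : LDim H = ((m : ℕ∞) : WithBot ℕ∞) := by
    apply le_antisymm
    · apply sSup_le
      rintro e ⟨n, rfl, hs⟩
      have : n ≤ m := le_csSup hbdd' hs
      exact_mod_cast this
    · exact shatters_le_LDim hmT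
  have hld : ldimN H = m := by
    rw [ldimN, hLD]
    simp
  rw [hld]
  refine ⟨hLD, hmT, ?_, hbdd m hmT⟩
  intro hs
  have : m + 1 ≤ m := le_csSup hbdd' hs
  omega

lemma ldimN_le_of_LDim_le {n : ℕ} (h : LDim H ≤ ((n : ℕ∞) : WithBot ℕ∞)) : ldimN H ≤ n := by
  rcases Set.eq_empty_or_nonempty H with rfl | hne
  · rw [ldimN_empty]; omega
  · exact ((ldim_spec n h hne).2.2.2)

lemma le_ldimN_of_le_LDim {t d : ℕ} (hd : LDim H ≤ ((d : ℕ∞) : WithBot ℕ∞))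
    (h : ((t : ℕ∞) : WithBot ℕ∞) ≤ LDim H) : t ≤ ldimN H := by
  have hne : H.Nonempty := by
    apply nonempty_of_LDim_ne_bot
    intro hb
    rw [hb] at h
    exact absurd h (by simp)
  obtain ⟨hLD, _, _, _⟩ := ldim_spec d hd hne
  rw [hLD] at h
  exact_mod_cast h

end LDimLemmas

section SOALemmas

variable {H G C D : Set (X → Bool)}

lemma shatters_of_LDim_eq {d n : ℕ} (hd : LDim H ≤ ((d : ℕ∞) : WithBot ℕ∞))
    (hn : LDim H = ((n : ℕ∞) : WithBot ℕ∞)) : Shatters H n := by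
  have hne : H.Nonempty := nonempty_of_LDim_ne_bot (by rw [hn]; exact WithBot.coe_ne_bot)
  obtain ⟨hLD, hsh, _, _⟩ := ldim_spec d hd hne
  have : ldimN H = n := by
    rw [hLD] at hn
    exact_mod_cast hn
  exact this ▸ hsh

lemma not_LDim_restrict_both {d n : ℕ} {x : X} (hd : LDim H ≤ ((d : ℕ∞) : WithBot ℕ∞))
    (hn : LDim H = ((n : ℕ∞) : WithBot ℕ∞))
    (h0 : LDim (restrict H x false) = LDim H) (h1 : LDim (restrict H x true) = LDim H) :
    False := by
  have hd0 : LDim (restrict H x false) ≤ ((d : ℕ∞) : WithBot ℕ∞) :=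
    (LDim_mono (restrict_subset H x false)).trans hd
  have hd1 : LDim (restrict H x true) ≤ ((d : ℕ∞) : WithBot ℕ∞) :=
    (LDim_mono (restrict_subset H x true)).trans hd
  have hs0 : Shatters (restrict H x false) n := shatters_of_LDim_eq hd0 (h0.trans hn)
  have hs1 : Shatters (restrict H x true) n := shatters_of_LDim_eq hd1 (h1.trans hn)
  have hs : Shatters H (n + 1) := ⟨x, hs0, hs1⟩
  have := shatters_le_LDim hs
  rw [hn] at this
  have hc : n + 1 ≤ n := by exact_mod_cast this
  omega

lemma SOA_eq_of_restrict {d n : ℕ} {x : X} {b : Bool}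
    (hd : LDim H ≤ ((d : ℕ∞) : WithBot ℕ∞)) (hn : LDim H = ((n : ℕ∞) : WithBot ℕ∞))
    (hb : LDim (restrict H x b) = LDim H) : SOA H x = b := by
  cases b with
  | false => rw [SOA, if_pos hb]
  | true =>
      rw [SOA, if_neg]
      intro h0
      exact not_LDim_restrict_both hd hn h0 hb

lemma SOA_eq_of_sandwich {d n : ℕ} (hCD : C ⊆ D)
    (hDd : LDim D ≤ ((d : ℕ∞) : WithBot ℕ∞)) (hDn : LDim D = ((n : ℕ∞) : WithBot ℕ∞))
    (hC : LDim C = LDim D) {x : X} {g : Bool}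
    (hg : LDim (restrict C x g) = LDim C) : SOA D x = g := by
  apply SOA_eq_of_restrict hDd hDn
  apply le_antisymm
  · exact LDim_mono (restrict_subset D x g)
  · calc LDim D = LDim (restrict C x g) := (hg.trans hC).symm
      _ ≤ LDim (restrict D x g) := LDim_mono (restrict_mono hCD x g)

lemma restrictSeq_replicate {A : Set (X → Bool)} {x : X} {y : Bool}
    (hall : ∀ h ∈ A, h x = y) (j : ℕ) :
    restrictSeq A (List.replicate j (x, y)) = A := by
  induction j with
  | zero => rfl
  | succ j ih =>
      rw [List.replicate_succ]
      show restrictSeq (restrict A x y) (List.replicate j (x, y)) = A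
      rw [restrict_eq_self hall, ih]

lemma Irred_le {k : ℕ} (hk : Irred k G) {xs : List X} (h1 : 1 ≤ xs.length)
    (h2 : xs.length ≤ k) : LDim (soaChain G xs) = LDim G := by
  have hne : xs ≠ [] := by intro h; rw [h] at h1; simp at h1
  set x0 := xs.getLast hne with hx0
  set ys := xs ++ List.replicate (k - xs.length) x0 with hys
  have hlen : ys.length = k := by simp [hys]; omega
  have hmem : (x0, SOA G x0) ∈ xs.map fun x => (x, SOA G x) :=
    List.mem_map_of_mem (List.getLast_mem hne)
  have hlab : ∀ h ∈ soaChain G xs, h x0 = SOA G x0 :=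
    fun h hh => mem_restrictSeq_label _ _ x0 (SOA G x0) hmem h hh
  have hchain : soaChain G ys = soaChain G xs := by
    rw [soaChain, hys, List.map_append, List.map_replicate, restrictSeq_append]
    exact restrictSeq_replicate hlab _
  rw [← hchain]
  exact hk ys hlen

lemma LDim_eq_zero_elems {g : X → Bool} (hg : g ∈ C)
    (h0 : LDim C ≤ ((0 : ℕ∞) : WithBot ℕ∞)) : ∀ h ∈ C, h = g := by
  intro h hh
  funext x
  by_contra hne
  have hsh : Shatters C 1 := by
    cases hhx : h x <;> cases hgx : g x
    · exact absurd (hhx.trans hgx.symm) hne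
    · exact ⟨x, ⟨h, hh, hhx⟩, ⟨g, hg, hgx⟩⟩
    · exact ⟨x, ⟨g, hg, hgx⟩, ⟨h, hh, hhx⟩⟩
    · exact absurd (hhx.trans hgx.symm) hne
  have := (shatters_le_LDim hsh).trans h0
  have : (1 : ℕ∞) ≤ 0 := by exact_mod_cast this
  simp at this

lemma SOA_of_subsingleton {g : X → Bool} (hg : g ∈ C)
    (hsub : ∀ h ∈ C, h = g) (x : X) : SOA C x = g x := by
  have hC0 : ((0 : ℕ∞) : WithBot ℕ∞) ≤ LDim C := shatters_le_LDim (n := 0) ⟨g, hg⟩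
  cases hgx : g x with
  | false =>
      rw [SOA, if_pos]
      apply le_antisymm (LDim_mono (restrict_subset C x false))
      rw [restrict_eq_self (fun h hh => by rw [hsub h hh, hgx])]
  | true =>
      rw [SOA, if_neg]
      intro heq
      have hres : restrict C x false = ∅ := by
        ext h
        simp only [restrict, Set.mem_setOf_eq, Set.mem_empty_iff_false, iff_false]
        rintro ⟨hh, hhx⟩
        rw [hsub h hh, hgx] at hhx
        exact Bool.noConfusion hhx
      rw [hres, LDim_empty] at heq
      rw [← heq] at hC0
      simp at hC0

lemma Irred_of_dim_le_zero (h0 : LDim C ≤ ((0 : ℕ∞) : WithBot ℕ∞)) (k : ℕ) : Irred k C := by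
  intro xs _
  rcases Set.eq_empty_or_nonempty C with rfl | ⟨g, hg⟩
  · rw [soaChain, restrictSeq_empty]
  · have hsub := LDim_eq_zero_elems hg h0
    rw [soaChain, restrictSeq_eq_self]
    rintro ⟨x, y⟩ hxy h hh
    obtain ⟨x', hx', hxy'⟩ := List.mem_map.mp hxy
    obtain ⟨hx, hy⟩ := Prod.mk.inj hxy'.symm
    subst hx; subst hy
    rw [hsub h hh, SOA_of_subsingleton hg hsub]

end SOALemmas

section TreeLemmas

lemma leafPaths_ne_nil (tr : DTree X) (pre : List (X × Bool)) : tr.leafPaths pre ≠ [] := by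
  induction tr generalizing pre with
  | leaf => simp [DTree.leafPaths]
  | node x l r ihl ihr =>
      simp only [DTree.leafPaths, ne_eq, List.append_eq_nil_iff]
      intro ⟨h1, _⟩
      exact ihl _ h1

lemma leafPaths_prefix (tr : DTree X) : ∀ (pre s : List (X × Bool)), s ∈ tr.leafPaths pre →
    ∃ w, s = pre ++ w := by
  induction tr with
  | leaf =>
      intro pre s hs
      simp only [DTree.leafPaths, List.mem_singleton] at hs
      exact ⟨[], by simp [hs]⟩
  | node x l r ihl ihr =>
      intro pre s hs
      simp only [DTree.leafPaths, List.mem_append] at hs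
      rcases hs with h | h
      · obtain ⟨w, hw⟩ := ihl _ _ h
        exact ⟨(x, false) :: w, by simp [hw]⟩
      · obtain ⟨w, hw⟩ := ihr _ _ h
        exact ⟨(x, true) :: w, by simp [hw]⟩

/-- Every prefix (of length ≥ the prefix of the subtree) of a leaf path is a node path. -/
lemma nodePaths_of_prefix (tr : DTree X) : ∀ (pre s q : List (X × Bool)),
    s ∈ tr.leafPaths pre → (∃ r, q ++ r = s) → pre.length ≤ q.length →
    q ∈ tr.nodePaths pre := by
  induction tr with
  | leaf =>
      intro pre s q hs hq hlen
      simp only [DTree.leafPaths, List.mem_singleton] at hs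
      subst hs
      obtain ⟨r, hr⟩ := hq
      have : r = [] := by
        have := congrArg List.length hr
        simp at this
        have : r.length = 0 := by omega
        exact List.length_eq_zero_iff.mp this
      subst this
      simp only [List.append_nil] at hr
      subst hr
      simp [DTree.nodePaths]
  | node x l r ihl ihr =>
      intro pre s q hs hq hlen
      simp only [DTree.leafPaths, List.mem_append] at hs
      obtain ⟨rq, hrq⟩ := hq
      rcases Nat.lt_or_ge pre.length q.length with hlt | hge
      · -- q extends pre by at least one; recurse into child
        rcases hs with h | h
        · have := ihl (pre ++ [(x, false)]) s q h ⟨rq, hrq⟩ (by simp; omega)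
          simp only [DTree.nodePaths, List.mem_cons, List.mem_append]
          exact Or.inr (Or.inl this)
        · have := ihr (pre ++ [(x, true)]) s q h ⟨rq, hrq⟩ (by simp; omega)
          simp only [DTree.nodePaths, List.mem_cons, List.mem_append]
          exact Or.inr (Or.inr this)
      · -- q has same length as pre, hence q = pre
        have hql : q.length = pre.length := le_antisymm hge hlen
        have hpre : ∃ w, s = pre ++ w := by
          rcases hs with h | h
          · obtain ⟨w, hw⟩ := leafPaths_prefix _ _ _ h
            exact ⟨(x, false) :: w, by simp [hw]⟩
          · obtain ⟨w, hw⟩ := leafPaths_prefix _ _ _ h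
            exact ⟨(x, true) :: w, by simp [hw]⟩
        obtain ⟨w, hw⟩ := hpre
        have : q = pre := by
          apply List.append_inj_left (hrq.trans hw) hql
        subst this
        simp [DTree.nodePaths]

/-- Routing a function through a tree reaches a leaf whose path is labelled by it. -/
lemma route (g : X → Bool) (tr : DTree X) (pre : List (X × Bool)) :
    ∃ s ∈ tr.leafPaths pre, ∃ ys : List X, s = pre ++ ys.map fun x => (x, g x) := by
  induction tr generalizing pre with
  | leaf => exact ⟨pre, by simp [DTree.leafPaths], [], by simp⟩
  | node x l r ihl ihr =>
      cases hgx : g x with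
      | false =>
          obtain ⟨s, hs, ys, hys⟩ := ihl (pre ++ [(x, false)])
          refine ⟨s, ?_, x :: ys, ?_⟩
          · simp only [DTree.leafPaths, List.mem_append]; exact Or.inl hs
          · simp [hys, hgx]
      | true =>
          obtain ⟨s, hs, ys, hys⟩ := ihr (pre ++ [(x, true)])
          refine ⟨s, ?_, x :: ys, ?_⟩
          · simp only [DTree.leafPaths, List.mem_append]; exact Or.inr hs
          · simp [hys, hgx]

lemma le_foldr_max {a : ℕ} {l : List ℕ} (ha : a ∈ l) : a ≤ l.foldr max 0 := by
  induction l with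
  | nil => simp at ha
  | cons b l ih =>
      rcases List.mem_cons.mp ha with rfl | h
      · exact le_max_left _ _
      · exact (ih h).trans (le_max_right _ _)

lemma foldr_max_mem {l : List ℕ} (hpos : 0 < l.foldr max 0) : l.foldr max 0 ∈ l := by
  induction l with
  | nil => simp at hpos
  | cons b l ih =>
      simp only [List.foldr_cons] at hpos ⊢
      rcases Nat.lt_or_ge b (l.foldr max 0) with h | h
      · rw [max_eq_right h.le]
        exact List.mem_cons_of_mem _ (ih (by omega))
      · rw [max_eq_left h]
        exact List.mem_cons_self

end TreeLemmas

section Core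

lemma arith_lt (p d t : ℕ) (hp : 1 ≤ p) :
    p * (2 ^ (d - t + 1) - 1) < 2 * p * 2 ^ (d - t) := by
  have hone : 1 ≤ 2 ^ (d - t) := Nat.one_le_two_pow
  rw [pow_succ]
  have h1 : 2 ^ (d - t) * 2 - 1 < 2 ^ (d - t) * 2 := by omega
  calc p * (2 ^ (d - t) * 2 - 1) < p * (2 ^ (d - t) * 2) :=
        Nat.mul_lt_mul_of_pos_left h1 (by omega)
    _ = 2 * p * 2 ^ (d - t) := by ring

lemma essential_of_irred (H : Set (X → Bool)) (p d t : ℕ) (hp : 1 ≤ p)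
    (hd : LDim H ≤ ((d : ℕ∞) : WithBot ℕ∞)) (ht : DDim p d H = t)
    (G' : Set (X → Bool)) (hsub : G' ⊆ H)
    (hGdim : LDim G' = ((t : ℕ∞) : WithBot ℕ∞))
    (hGirr : Irred (2 * p * 2 ^ (d - t)) G') :
    Essential p d H (SOA G') := by
  intro tr htr
  obtain ⟨⟨hnode, hleaf⟩, hdeg⟩ := htr
  obtain ⟨s2, hs2mem, xs, hs2⟩ := route (SOA G') tr []
  rw [List.nil_append] at hs2
  have hlt := arith_lt p d t hp
  -- prefix dimension claim
  have hprefix : ∀ j, j ≤ xs.length →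
      LDim (restrictSeq G' ((xs.take j).map fun x => (x, SOA G' x))) = LDim G' := by
    intro j
    induction j with
    | zero => intro _; rfl
    | succ j ih =>
        intro hj1
        have hj : j ≤ xs.length := by omega
        have hdimj := ih hj
        set q : List (X × Bool) := (xs.take j).map fun x => (x, SOA G' x) with hq
        have hqpre : q ++ (s2.drop j) = s2 := by
          rw [hs2, hq, List.map_take]
          exact List.take_append_drop j _
        have hqnode : q ∈ tr.nodePaths [] :=
          nodePaths_of_prefix tr [] s2 q hs2mem ⟨s2.drop j, hqpre⟩ (by simp)
        have hqlen : q.length = j := by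
          simp only [hq, List.length_map, List.length_take]
          omega
        have hsubq : restrictSeq G' q ⊆ restrictSeq H q := restrictSeq_mono q hsub
        have hdq : LDim (restrictSeq H q) ≤ ((d : ℕ∞) : WithBot ℕ∞) :=
          (LDim_mono (restrictSeq_subset q H)).trans hd
        have htq : ((t : ℕ∞) : WithBot ℕ∞) ≤ LDim (restrictSeq H q) := by
          rw [← hGdim, ← hdimj]; exact LDim_mono hsubq
        have hnq : t ≤ ldimN (restrictSeq H q) := le_ldimN_of_le_LDim hdq htq
        have hbound := hnode q hqnode
        rw [hqlen] at hbound
        have hble : p * (2 ^ (d - ldimN (restrictSeq H q) + 1) - 1) ≤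
            p * (2 ^ (d - t + 1) - 1) := by
          apply Nat.mul_le_mul_left
          have h1 : d - ldimN (restrictSeq H q) ≤ d - t := Nat.sub_le_sub_left hnq d
          have h2 := Nat.pow_le_pow_right (by norm_num : 1 ≤ 2) (Nat.add_le_add_right h1 1)
          omega
        have hjk : j + 1 ≤ 2 * p * 2 ^ (d - t) :=
          Nat.succ_le_of_lt (Nat.lt_of_le_of_lt (hbound.trans hble) hlt)
        have hlen1 : (xs.take (j + 1)).length = j + 1 := by
          simp only [List.length_take]; omega
        have hfin := Irred_le hGirr (xs := xs.take (j + 1)) (by omega) (by omega)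
        rwa [soaChain] at hfin
  have hfin : LDim (restrictSeq G' s2) = LDim G' := by
    have h := hprefix xs.length le_rfl
    rwa [List.take_length, ← hs2] at h
  have hs2node : s2 ∈ tr.nodePaths [] :=
    nodePaths_of_prefix tr [] s2 s2 hs2mem ⟨[], by simp⟩ (by simp)
  have hdH2 : LDim (restrictSeq H s2) ≤ ((d : ℕ∞) : WithBot ℕ∞) :=
    (LDim_mono (restrictSeq_subset s2 H)).trans hd
  have htH2 : ((t : ℕ∞) : WithBot ℕ∞) ≤ LDim (restrictSeq H s2) := by
    rw [← hGdim, ← hfin]; exact LDim_mono (restrictSeq_mono s2 hsub)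
  have hge : t ≤ ldimN (restrictSeq H s2) := le_ldimN_of_le_LDim hdH2 htH2
  have hle : ldimN (restrictSeq H s2) ≤ t := by
    rw [← ht, ← hdeg, degree]
    exact le_foldr_max (List.mem_map_of_mem hs2mem)
  have hldim2 : ldimN (restrictSeq H s2) = t := le_antisymm hle hge
  have hne2 : (restrictSeq H s2).Nonempty := by
    apply Set.Nonempty.mono (restrictSeq_mono s2 hsub)
    exact nonempty_of_LDim_ne_bot (by rw [hfin, hGdim]; exact WithBot.coe_ne_bot)
  have hLD2 : LDim (restrictSeq H s2) = ((t : ℕ∞) : WithBot ℕ∞) := by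
    obtain ⟨h1, _, _, _⟩ := ldim_spec d hdH2 hne2
    rw [h1, hldim2]
  have hxslen : xs.length + 1 ≤ 2 * p * 2 ^ (d - t) := by
    have hbound := hnode s2 hs2node
    have hs2len : s2.length = xs.length := by rw [hs2]; simp
    rw [hs2len, hldim2] at hbound
    exact Nat.succ_le_of_lt (Nat.lt_of_le_of_lt hbound hlt)
  have hsoa : ∀ x, SOA (restrictSeq H s2) x = SOA G' x := by
    intro x
    have hchain : restrict (restrictSeq G' s2) x (SOA G' x) = soaChain G' (xs ++ [x]) := by
      rw [soaChain, List.map_append, restrictSeq_append, ← hs2]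
      rfl
    have hdim : LDim (restrict (restrictSeq G' s2) x (SOA G' x)) =
        LDim (restrictSeq G' s2) := by
      rw [hchain, hfin]
      exact Irred_le hGirr (by simp) (by simp; omega)
    exact SOA_eq_of_sandwich (restrictSeq_mono s2 hsub) hdH2 hLD2
      (by rw [hfin, hGdim, hLD2]) hdim
  refine ⟨s2, hs2mem, ?_, funext hsoa⟩
  rw [hldim2]
  exact ht.symm

end Core

lemma foldr_max_zero {l : List ℕ} (h : ∀ a ∈ l, a = 0) : l.foldr max 0 = 0 := by
  induction l with
  | nil => rfl
  | cons b l ih =>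
      simp only [List.foldr_cons]
      rw [h b List.mem_cons_self, ih fun a ha => h a (List.mem_cons_of_mem _ ha)]
      exact max_self 0

/-- if `DDim_{2p,d}(H) = DDim_{p,d}(H)`, then `H` has at least one
`(p,d)`-essential hypothesis. -/
theorem essential_exists (H : Set (X → Bool)) (p d : ℕ)
    (hd : LDim H ≤ ((d : ℕ∞) : WithBot ℕ∞))
    (heq : DDim (2 * p) d H = DDim p d H) :
    ∃ f : X → Bool, Essential p d H f := by
  by_cases hopt : ∃ tr : DTree X, OptimalTree p d H tr
  swap
  · exact ⟨fun _ => false, fun tr htr => absurd ⟨tr, htr⟩ hopt⟩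
  obtain ⟨Topt, hTvalid, hTdeg⟩ := hopt
  rcases Nat.eq_zero_or_pos p with hp0 | hp
  · -- p = 0 : every optimal tree is a single leaf
    subst hp0
    refine ⟨SOA H, ?_⟩
    intro tr htr
    obtain ⟨⟨hnode, hleaf⟩, hdeg⟩ := htr
    cases tr with
    | leaf =>
        refine ⟨[], by simp [DTree.leafPaths], ?_, rfl⟩
        rw [← hdeg, degree]
        simp [DTree.leafPaths]
    | node x l r =>
        exfalso
        obtain ⟨s, hs⟩ := List.exists_mem_of_ne_nil _ (leafPaths_ne_nil l [(x, false)])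
        have hmem : s ∈ (DTree.node x l r).leafPaths [] := by
          simp only [DTree.leafPaths, List.mem_append]
          exact Or.inl hs
        have hb := (hleaf s hmem).1
        obtain ⟨w, hw⟩ := leafPaths_prefix l [(x, false)] s hs
        rw [zero_mul, hw] at hb
        simp at hb
  -- p ≥ 1
  rcases Set.eq_empty_or_nonempty H with rfl | ⟨h0, hh0⟩
  · -- empty class
    refine ⟨SOA (∅ : Set (X → Bool)), ?_⟩
    intro tr htr
    obtain ⟨⟨hnode, hleaf⟩, hdeg⟩ := htr
    obtain ⟨s, hs⟩ := List.exists_mem_of_ne_nil _ (leafPaths_ne_nil tr [])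
    have hdeg0 : degree (∅ : Set (X → Bool)) tr = 0 := by
      rw [degree]
      apply foldr_max_zero
      intro a ha
      obtain ⟨s', _, hval⟩ := List.mem_map.mp ha
      rw [← hval, restrictSeq_empty, ldimN_empty]
    refine ⟨s, hs, ?_, by rw [restrictSeq_empty]⟩
    rw [restrictSeq_empty, ldimN_empty, ← hdeg, hdeg0]
  -- H nonempty, p ≥ 1
  set t := DDim p d H with hts
  have hT2 : ∃ T2 : DTree X, ValidTree (2 * p) d H T2 ∧ degree H T2 = t := by
    by_cases h2 : {n : ℕ | ∃ tr : DTree X, ValidTree (2 * p) d H tr ∧ degree H tr = n}.Nonempty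
    · obtain ⟨T2, hv, hdeg2⟩ := Nat.sInf_mem h2
      exact ⟨T2, hv, by rw [hdeg2]; exact heq⟩
    · exfalso
      apply h2
      have hdeg0 : degree H Topt = 0 := by
        have hsinf : DDim (2 * p) d H = 0 := by
          rw [DDim, Set.not_nonempty_iff_eq_empty.mp h2, Nat.sInf_empty]
        rw [hTdeg, ← heq, hsinf]
      refine ⟨degree H Topt, Topt, ⟨?_, ?_⟩, rfl⟩
      · intro s hs
        exact (hTvalid.1 s hs).trans (Nat.mul_le_mul (by omega) (le_refl _))
      · intro s hs
        refine ⟨(hTvalid.2 s hs).1.trans (Nat.mul_le_mul (by omega) (le_refl _)), ?_⟩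
        have hl0 : ldimN (restrictSeq H s) = 0 := by
          have hle' : ldimN (restrictSeq H s) ≤ degree H Topt :=
            le_foldr_max (List.mem_map_of_mem hs)
          rw [hdeg0] at hle'
          omega
        apply Irred_of_dim_le_zero
        rcases Set.eq_empty_or_nonempty (restrictSeq H s) with he | hne
        · rw [he, LDim_empty]; exact bot_le
        · have hdle : LDim (restrictSeq H s) ≤ ((d : ℕ∞) : WithBot ℕ∞) :=
            (LDim_mono (restrictSeq_subset s H)).trans hd
          obtain ⟨h1, _, _, _⟩ := ldim_spec d hdle hne
          rw [h1, hl0]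
          exact le_refl _
  obtain ⟨T2, hT2valid, hT2deg⟩ := hT2
  have hleafpick : ∃ s ∈ T2.leafPaths [], (restrictSeq H s).Nonempty ∧
      ldimN (restrictSeq H s) = t := by
    rcases Nat.eq_zero_or_pos t with ht0 | htpos
    · obtain ⟨s, hs, xs, hxs⟩ := route h0 T2 []
      rw [List.nil_append] at hxs
      have hmem : h0 ∈ restrictSeq H s := hxs ▸ mem_restrictSeq_self hh0 xs
      refine ⟨s, hs, ⟨h0, hmem⟩, ?_⟩
      have hle' : ldimN (restrictSeq H s) ≤ degree H T2 :=
        le_foldr_max (List.mem_map_of_mem hs)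
      rw [hT2deg] at hle'
      omega
    · have hfold : ((T2.leafPaths []).map fun s' => ldimN (restrictSeq H s')).foldr max 0
          = t := by
        have h := hT2deg
        rwa [degree] at h
      have hmem := foldr_max_mem (by rw [hfold]; exact htpos)
      rw [hfold] at hmem
      obtain ⟨s, hs, hval⟩ := List.mem_map.mp hmem
      refine ⟨s, hs, ?_, hval⟩
      rcases Set.eq_empty_or_nonempty (restrictSeq H s) with he | hne
      · rw [he, ldimN_empty] at hval; omega
      · exact hne
  obtain ⟨s, hsmem, hne, hldim⟩ := hleafpick
  have hsub : restrictSeq H s ⊆ H := restrictSeq_subset s H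
  have hdle : LDim (restrictSeq H s) ≤ ((d : ℕ∞) : WithBot ℕ∞) := (LDim_mono hsub).trans hd
  have hGdim : LDim (restrictSeq H s) = ((t : ℕ∞) : WithBot ℕ∞) := by
    obtain ⟨h1, _, _, _⟩ := ldim_spec d hdle hne
    rw [h1, hldim]
  have hGirr : Irred (2 * p * 2 ^ (d - t)) (restrictSeq H s) := by
    have h := (hT2valid.2 s hsmem).2
    rwa [hldim] at h
  exact ⟨SOA (restrictSeq H s),
    essential_of_irred H p d t hp hd hts.symm (restrictSeq H s) hsub hGdim hGirr⟩
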